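/- arXiv:math/0701418 — 2 statements merged into one kernel-verified Lean document; each statement's English description precedes it below -/
import Mathlib

section
/- Let δ, ε > 0 and let d_ρ = ρ/(1−ρ) for ρ ∈ [0,1). Then there exist η > 0, c > 0 and R < ∞ such that for every z ∈ ℝ₊² with z(2)/z(1) > d_ρ² + δ and |z| > R, and every real n with ε|z| < n ≤ z(1), one has μ(z − (0,1)) − μ(z − (n, −(d_ρ + η)n)) > c|z|, where μ(y) = (√y(1) + √y(2))² for y ∈ ℝ₊² and |z| = |z(1)| + |z(2)|. -/
open MeasureTheory ProbabilityTheory Filter Real Set Topology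

noncomputable section

namespace CompetitionInterface

/-- A directed (up-right) step in `ℤ²`. -/
def DStep (a b : ℤ × ℤ) : Prop := b = a + (1, 0) ∨ b = a + (0, 1)

/-- `p` is a finite directed path from `z` to `z'`. -/
def IsDirPath (z z' : ℤ × ℤ) (p : List (ℤ × ℤ)) : Prop :=
  p ≠ [] ∧ p.head? = some z ∧ p.getLast? = some z' ∧ p.Chain' DStep

/-- The last-passage time `T(z → z')` for the weights `X`:  the maximal total weight of a
directed path from `z` to `z'` (by convention `sSup ∅ = 0`). -/
def lpp (X : ℤ × ℤ → ℝ) (z z' : ℤ × ℤ) : ℝ :=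
  sSup {w | ∃ p, IsDirPath z z' p ∧ w = (p.map X).sum}

/-- The boundary point `A_k = (α_k + 1, k)`. -/
def ptA (a : ℕ → ℤ) (k : ℕ) : ℤ × ℤ := (a k + 1, (k : ℤ))

/-- The boundary point `B_m = (m, β_m + 1)`. -/
def ptB (b : ℕ → ℤ) (m : ℕ) : ℤ × ℤ := ((m : ℤ), b m + 1)

/-- `G¹(z) = max_{0 < k ≤ z(2)} T(A_k → z)`. -/
def G1 (X : ℤ × ℤ → ℝ) (a : ℕ → ℤ) (z : ℤ × ℤ) : ℝ :=
  sSup {w | ∃ k : ℕ, 1 ≤ k ∧ (k : ℤ) ≤ z.2 ∧ w = lpp X (ptA a k) z}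

/-- `G²(z) = max_{0 < m ≤ z(1)} T(B_m → z)`. -/
def G2 (X : ℤ × ℤ → ℝ) (b : ℕ → ℤ) (z : ℤ × ℤ) : ℝ :=
  sSup {w | ∃ m : ℕ, 1 ≤ m ∧ (m : ℤ) ≤ z.1 ∧ w = lpp X (ptB b m) z}

/-- `G(z) = max (G¹(z), G²(z))`. -/
def Gf (X : ℤ × ℤ → ℝ) (a b : ℕ → ℤ) (z : ℤ × ℤ) : ℝ := max (G1 X a z) (G2 X b z)

/-- The competition interface determined by the passage-time function `g`:
`φ₀ = (0,0)` and `φ_{n+1} = φ_n + (1,0)` if `g (φ_n + (1,0)) < g (φ_n + (0,1))`,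
`φ_{n+1} = φ_n + (0,1)` otherwise. -/
def phi (g : ℤ × ℤ → ℝ) : ℕ → ℤ × ℤ
  | 0 => (0, 0)
  | n + 1 =>
      if g (phi g n + (1, 0)) < g (phi g n + (0, 1)) then phi g n + (1, 0)
      else phi g n + (0, 1)

/-- `|z| = |z(1)| + |z(2)|`, as a real number. -/
def znorm (z : ℤ × ℤ) : ℝ := |(z.1 : ℝ)| + |(z.2 : ℝ)|

/-- The unit (Euclidean) direction of a lattice point. -/
def dirOf (z : ℤ × ℤ) : ℝ × ℝ :=
  ((z.1 : ℝ) / Real.sqrt ((z.1 : ℝ) ^ 2 + (z.2 : ℝ) ^ 2),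
   (z.2 : ℝ) / Real.sqrt ((z.1 : ℝ) ^ 2 + (z.2 : ℝ) ^ 2))

/-- `ψ(t) = (I(t), J(t)) = φ_n` for `t ∈ [G(φ_n), G(φ_{n+1}))`. -/
def psi (g : ℤ × ℤ → ℝ) (t : ℝ) : ℤ × ℤ := phi g (sSup {n : ℕ | g (phi g n) ≤ t})

/-- The family `X` is i.i.d. with the exponential distribution of mean 1. -/
def IIDExp {Ω : Type*} [MeasurableSpace Ω] (μ : Measure Ω) (X : ℤ × ℤ → Ω → ℝ) : Prop :=
  (∀ z, Measurable (X z)) ∧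
    iIndepFun X μ ∧ ∀ z, μ.map (X z) = expMeasure 1

/-- The boundary sequence `α` is integer valued, negative, nonincreasing (for indices `≥ 1`)
and has `α_k / k → -(1-λ)/λ`. -/
def BoundaryA (a : ℕ → ℤ) (lam : ℝ) : Prop :=
  (∀ k, 1 ≤ k → a k < 0) ∧ (∀ k, 1 ≤ k → a (k + 1) ≤ a k) ∧
    Tendsto (fun k : ℕ => (a k : ℝ) / k) atTop (𝓝 (-(1 - lam) / lam))

/-- The boundary sequence `β` is integer valued, negative, nonincreasing (for indices `≥ 1`)
and has `β_m / m → -ρ/(1-ρ)`. -/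
def BoundaryB (b : ℕ → ℤ) (rho : ℝ) : Prop :=
  (∀ m, 1 ≤ m → b m < 0) ∧ (∀ m, 1 ≤ m → b (m + 1) ≤ b m) ∧
    Tendsto (fun m : ℕ => (b m : ℝ) / m) atTop (𝓝 (-rho / (1 - rho)))

/-- The geometric distribution on `{0, 1, 2, …} ⊆ ℝ` with success probability `p`
(mean `(1-p)/p`). -/
def geomMeasure (p : ℝ) : Measure ℝ :=
  Measure.sum fun k : ℕ => ENNReal.ofReal (p * (1 - p) ^ k) • Measure.dirac (k : ℝ)

/-- The increment sequence `(-(α₁+1), α₁ - α₂, α₂ - α₃, …)` of a random boundary sequence,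
as real-valued random variables. -/
def bInc {Ω : Type*} (A : Ω → ℕ → ℤ) : ℕ → Ω → ℝ
  | 0 => fun ω => ((-(A ω 1 + 1) : ℤ) : ℝ)
  | k + 1 => fun ω => ((A ω (k + 1) - A ω (k + 2) : ℤ) : ℝ)

/-- The boundary pair `(α, β)` has the distribution `ν_{λ,ρ}` and is independent of the
weights `X`: the increment sequences of `α` and of `β` and the weights are all jointly
independent, the `α`-increments being i.i.d. geometric with mean `(1-λ)/λ` and the
`β`-increments i.i.d. geometric with mean `ρ/(1-ρ)`. -/
def NuBoundary {Ω : Type*} [MeasurableSpace Ω] (μ : Measure Ω)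
    (X : ℤ × ℤ → Ω → ℝ) (A B : Ω → ℕ → ℤ) (lam rho : ℝ) : Prop :=
  (∀ z, Measurable (X z)) ∧ (∀ k, Measurable fun ω => A ω k) ∧
  (∀ m, Measurable fun ω => B ω m) ∧
  iIndepFun (Sum.elim X (Sum.elim (bInc A) (bInc B))) μ ∧
  (∀ z, μ.map (X z) = expMeasure 1) ∧
  (∀ k, μ.map (bInc A k) = geomMeasure lam) ∧
  (∀ m, μ.map (bInc B m) = geomMeasure (1 - rho)) ∧
  (∀ᵐ ω ∂μ, (∀ k, 1 ≤ k → A ω k < 0) ∧ (∀ k, 1 ≤ k → A ω (k + 1) ≤ A ω k) ∧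
    (∀ m, 1 ≤ m → B ω m < 0) ∧ (∀ m, 1 ≤ m → B ω (m + 1) ≤ B ω m))

/-- Casting a lattice point to `ℝ²`. -/
def toR2 (z : ℤ × ℤ) : ℝ × ℝ := ((z.1 : ℝ), (z.2 : ℝ))

/-- An infinite directed (up-right) path. -/
def IsDirSeq (f : ℕ → ℤ × ℤ) : Prop := ∀ n, DStep (f n) (f (n + 1))

/-- `f` is a semi-infinite geodesic for the weights `X`: every finite subpath is a geodesic. -/
def IsSemiGeo (X : ℤ × ℤ → ℝ) (f : ℕ → ℤ × ℤ) : Prop :=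
  IsDirSeq f ∧ ∀ k l : ℕ, k ≤ l → lpp X (f k) (f l) = ∑ j ∈ Finset.Icc k l, X (f j)

/-- The infinite path `f` has asymptotic direction `e^{iθ} = (cos θ, sin θ)`. -/
def HasDir (f : ℕ → ℤ × ℤ) (θ : ℝ) : Prop :=
  Tendsto (fun n => dirOf (f n)) atTop (𝓝 (Real.cos θ, Real.sin θ))

/-- The polygonal curve in `ℝ²` traced by the infinite path `f`. -/
def pathSet (f : ℕ → ℤ × ℤ) : Set (ℝ × ℝ) := ⋃ n, segment ℝ (toR2 (f n)) (toR2 (f (n + 1)))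

/-- Euclidean distance in `ℝ²`. -/
def edist2 (x y : ℝ × ℝ) : ℝ := Real.sqrt ((x.1 - y.1) ^ 2 + (x.2 - y.2) ^ 2)

/-- The path `f`, with asymptotic direction `e^{iθ}`, has fluctuation at most `κ`:
for all sufficiently large `r`, every intersection point of the (polygonal) path with the
hyperplane through `f 0 + r e^{iθ}` perpendicular to `e^{iθ}` is within distance `r^κ` of
`f 0 + r e^{iθ}`. -/
def FluctAtMost (f : ℕ → ℤ × ℤ) (θ κ : ℝ) : Prop :=
  ∀ᶠ r : ℝ in atTop, ∀ x ∈ pathSet f,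
    (x.1 - ((toR2 (f 0)).1 + r * Real.cos θ)) * Real.cos θ +
        (x.2 - ((toR2 (f 0)).2 + r * Real.sin θ)) * Real.sin θ = 0 →
      edist2 x ((toR2 (f 0)).1 + r * Real.cos θ, (toR2 (f 0)).2 + r * Real.sin θ) ≤ r ^ κ

/-- The fluctuation exponent `ξ₁(θ)` of the semi-infinite geodesics of direction `e^{iθ}`. -/
def xi1 {Ω : Type*} [MeasurableSpace Ω] (μ : Measure Ω) (X : ℤ × ℤ → Ω → ℝ) (θ : ℝ) : ℝ :=
  sInf {κ : ℝ |
    μ {ω | ∀ f, IsSemiGeo (fun z => X z ω) f → HasDir f θ → FluctAtMost f θ κ} = 1}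

/-- The fluctuation exponent `ξ₂` of the set of all semi-infinite geodesics. -/
def xi2 {Ω : Type*} [MeasurableSpace Ω] (μ : Measure Ω) (X : ℤ × ℤ → Ω → ℝ) : ℝ :=
  sInf {κ : ℝ |
    μ {ω | ∀ f θ, IsSemiGeo (fun z => X z ω) f → HasDir f θ → FluctAtMost f θ κ} = 1}

/-- The fluctuation exponent `χ` of the competition interface (fluctuations measured
about its almost-sure asymptotic direction). -/
def chiExp {Ω : Type*} [MeasurableSpace Ω] (μ : Measure Ω) (X : ℤ × ℤ → Ω → ℝ)
    (A B : Ω → ℕ → ℤ) : ℝ :=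
  sInf {κ : ℝ |
    μ {ω | ∃ θ ∈ Icc 0 (π / 2),
        HasDir (phi (Gf (fun z => X z ω) (A ω) (B ω))) θ ∧
        FluctAtMost (phi (Gf (fun z => X z ω) (A ω) (B ω))) θ κ} = 1}

/-- `M(z)`: the (a.s. unique) index `m`, `0 < m ≤ z(1)`, maximizing `T(B_m → z)`. -/
def argMaxB (X : ℤ × ℤ → ℝ) (b : ℕ → ℤ) (z : ℤ × ℤ) : ℕ :=
  sSup {m : ℕ | 1 ≤ m ∧ (m : ℤ) ≤ z.1 ∧
    ∀ m' : ℕ, 1 ≤ m' → (m' : ℤ) ≤ z.1 → lpp X (ptB b m') z ≤ lpp X (ptB b m) z}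

/-- The geodesic from `s` to `e` passes through `m` (formulated through additivity of
passage times; a.s. equivalent to the geodesic containing `m`). -/
def PassesThrough (X : ℤ × ℤ → ℝ) (s e m : ℤ × ℤ) : Prop :=
  s ≤ m ∧ m ≤ e ∧ lpp X s m + lpp X m e - X m = lpp X s e

/-- The angle between two vectors of `ℝ²`. -/
def vang (u v : ℝ × ℝ) : ℝ :=
  Real.arccos ((u.1 * v.1 + u.2 * v.2) /
    (Real.sqrt (u.1 ^ 2 + u.2 ^ 2) * Real.sqrt (v.1 ^ 2 + v.2 ^ 2)))

/-- `R^out[x, z]`: the set of `z' ≥ z` such that the geodesic from `x` to `z'`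
passes through `z`. -/
def Rout (X : ℤ × ℤ → ℝ) (x z : ℤ × ℤ) : Set (ℤ × ℤ) :=
  {z' | z ≤ z' ∧ PassesThrough X x z' z}

/-- The cone `C(x, z, φ)` of points `z' ≥ x` making an angle at most `φ` with `z - x` at `x`. -/
def cone (x z : ℤ × ℤ) (φ : ℝ) : Set (ℤ × ℤ) :=
  {z' | x ≤ z' ∧ vang (toR2 z - toR2 x) (toR2 z' - toR2 x) ≤ φ}

/-- `(x, z)` is a good pair (for the exponent `δ`). -/
def GoodPair (δ : ℝ) (X : ℤ × ℤ → ℝ) (x z : ℤ × ℤ) : Prop :=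
  Rout X x z ⊆ cone x z (znorm (z - x) ^ (-δ)) ∪
    ⋃ z' ∈ {z' ∈ cone x z (znorm (z - x) ^ (-δ)) | znorm (z' - x) > 2 * znorm (z - x)},
      Rout X x z'

/-- `μ(y) = (√y(1) + √y(2))²`, the Rost shape function. -/
def muSh (y : ℝ × ℝ) : ℝ := (Real.sqrt y.1 + Real.sqrt y.2) ^ 2

/-- `|z| = |z(1)| + |z(2)|` for `z ∈ ℝ²`. -/
def rnorm (z : ℝ × ℝ) : ℝ := |z.1| + |z.2|

/-- The shape function `p` of Proposition 2.1 (the case conditions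
`(ρ/(1-ρ))² ≤ z(2)/z(1) ≤ (λ/(1-λ))²` etc. are written in cleared-denominator form). -/
def pShape (lam rho : ℝ) (z : ℝ × ℝ) : ℝ :=
  if rho ^ 2 * z.1 ≤ (1 - rho) ^ 2 * z.2 ∧ (1 - lam) ^ 2 * z.2 ≤ lam ^ 2 * z.1 then
    (Real.sqrt z.1 + Real.sqrt z.2) ^ 2
  else if lam ^ 2 * z.1 ≤ (1 - lam) ^ 2 * z.2 ∧
      lam * rho * z.1 ≤ (1 - lam) * (1 - rho) * z.2 then
    z.1 / (1 - lam) + z.2 / lam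
  else
    z.1 / (1 - rho) + z.2 / rho

/-- The shape function `p₂` for the point to half-line model. -/
def p2Shape (rho : ℝ) (z : ℝ × ℝ) : ℝ :=
  if rho ^ 2 * z.1 ≤ (1 - rho) ^ 2 * z.2 then (Real.sqrt z.1 + Real.sqrt z.2) ^ 2
  else z.1 / (1 - rho) + z.2 / rho

/-!
The shape function `μ` is concave and homogeneous of degree one, so it lies below each of its
tangent planes. With `d = d_ρ`, comparing `μ` at `z - (n, -(d + η) n)` with its tangent
plane at `z - (0, 1)`, whose gradient is proportional to `(t, 1)` with `t = √((z₂ - 1) / z₁)`,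
gives `μ(z - (0, 1)) - μ(z - (n, -(d + η) n)) ≥ (t - d - η) n - 1`. In the cone `z₂ / z₁ > d² + δ`
the slope `t` stays above some `m > d + η` once `z₁ ≥ n > ε |z|` is large, and the gain is then
of order `(m - d - η) n`, hence of order `|z|`.
-/

theorem sq_sqrt_add_sqrt_le {u v a b : ℝ} (hu : 0 < u) (hv : 0 < v) (ha : 0 ≤ a) (hb : 0 ≤ b) :
    (√a + √b) ^ 2 ≤ (u + v) * (a / u + b / v) := by
  obtain ⟨p, hp, rfl⟩ : ∃ p, 0 ≤ p ∧ p ^ 2 = a := ⟨√a, sqrt_nonneg a, sq_sqrt ha⟩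
  obtain ⟨q, hq, rfl⟩ : ∃ q, 0 ≤ q ∧ q ^ 2 = b := ⟨√b, sqrt_nonneg b, sq_sqrt hb⟩
  rw [sqrt_sq hp, sqrt_sq hq, div_add_div _ _ hu.ne' hv.ne', mul_div_assoc',
    le_div_iff₀ (by positivity)]
  -- Cauchy–Schwarz in the form `(p + q)² u v ≤ (u + v)(p² v + q² u)`, i.e. `0 ≤ (p v - q u)²`.
  nlinarith [sq_nonneg (p * v - q * u)]

/-- The left side is the derivative of `μ` at `p` in the direction `p - y`. -/
theorem muSh_sub_muSh_ge {p y : ℝ × ℝ} (hp₁ : 0 < p.1) (hp₂ : 0 < p.2)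
    (hy₁ : 0 ≤ y.1) (hy₂ : 0 ≤ y.2) :
    (√p.1 + √p.2) * ((p.1 - y.1) / √p.1 + (p.2 - y.2) / √p.2) ≤ muSh p - muSh y := by
  have hu := sqrt_pos.2 hp₁
  have hv := sqrt_pos.2 hp₂
  have hμy := sq_sqrt_add_sqrt_le hu hv hy₁ hy₂
  have hsplit : (p.1 - y.1) / √p.1 + (p.2 - y.2) / √p.2
      = (√p.1 + √p.2) - (y.1 / √p.1 + y.2 / √p.2) := by
    field_simp
    linear_combination (-√p.2) * sq_sqrt hp₁.le - √p.1 * sq_sqrt hp₂.le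
  rw [hsplit, muSh, muSh]
  nlinarith

theorem le_add_mul_sub_div {u v m e n : ℝ} (hu : 0 < u) (hv : 0 < v) (hmuv : m * u ≤ v)
    (hn : 0 ≤ n) (hgain : 1 ≤ (m - e) * n) :
    (m - e) * n - 1 ≤ (u + v) * (n / u - (e * n + 1) / v) := by
  have ht : m ≤ v / u := (le_div_iff₀ hu).2 hmuv
  have hfactor : (u + v) * (n / u - (e * n + 1) / v) = (1 + u / v) * ((v / u - e) * n - 1) := by
    field_simp
    ring
  have hbracket : (m - e) * n - 1 ≤ (v / u - e) * n - 1 := by nlinarith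
  rw [hfactor]
  nlinarith [div_pos hu hv]

theorem muSh_gain_of_steep {z : ℝ × ℝ} {m e n : ℝ} (he : 0 ≤ e) (hz : m ^ 2 * z.1 ≤ z.2 - 1)
    (hm : 0 ≤ m) (hn : 0 < n) (hnz : n ≤ z.1) (hgain : 1 ≤ (m - e) * n) :
    (m - e) * n - 1 ≤ muSh (z - (0, 1)) - muSh (z - (n, -e * n)) := by
  have hz₁ : 0 < z.1 := hn.trans_le hnz
  have hmuv : m * √z.1 ≤ √(z.2 - 1) := by
    simpa [sqrt_mul (sq_nonneg m), sqrt_sq hm] using sqrt_le_sqrt hz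
  have hm₀ : 0 < m := by nlinarith
  have hz₂ : 0 < z.2 - 1 := lt_of_lt_of_le (by positivity) hz
  have htangent := muSh_sub_muSh_ge (p := z - (0, 1)) (y := z - (n, -e * n))
    (by simpa using hz₁) (by simpa using hz₂) (by simpa using hnz)
    (by simp only [Prod.snd_sub]; nlinarith)
  have halg := le_add_mul_sub_div (sqrt_pos.2 hz₁) (sqrt_pos.2 hz₂) hmuv hn.le hgain
  simp only [Prod.fst_sub, Prod.snd_sub, sub_zero] at htangent
  have hbracket : (z.1 - (z.1 - n)) / √z.1 + (z.2 - 1 - (z.2 - -e * n)) / √(z.2 - 1)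
      = n / √z.1 - (e * n + 1) / √(z.2 - 1) := by ring
  exact halg.trans (hbracket ▸ htangent)

theorem exists_muSh_gain {d δ ε : ℝ} (hd : 0 ≤ d) (hδ : 0 < δ) (hε : 0 < ε) :
    ∃ η > (0 : ℝ), ∃ c > (0 : ℝ), ∃ R : ℝ, ∀ z : ℝ × ℝ, d ^ 2 + δ < z.2 / z.1 → R < rnorm z →
      ∀ n : ℝ, ε * rnorm z < n → n ≤ z.1 →
        muSh (z - (0, 1)) - muSh (z - (n, -(d + η) * n)) > c * rnorm z := by
  -- Any slope `m` with `d < m < √(d² + δ)` works; `η` is chosen so that `d + η < m`.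
  set m := √(d ^ 2 + δ / 2)
  have hm_sq : m ^ 2 = d ^ 2 + δ / 2 := sq_sqrt (by positivity)
  have hdm : d < m := lt_sqrt hd |>.2 (by linarith)
  set η := (m - d) / 2
  have hη : 0 < η := by positivity
  refine ⟨η, hη, η * ε / 2, by positivity, 2 / (η * ε) + 2 / (δ * ε), ?_⟩
  intro z hslope hR n hn hnz
  have hεz : 2 / η + 2 / δ < ε * rnorm z := by
    rwa [div_mul_eq_div_div, div_mul_eq_div_div, ← add_div, div_lt_iff₀ hε, mul_comm] at hR
  have hn_large : 2 / η + 2 / δ < n := hεz.trans hn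
  have hn₀ : 0 < n := lt_trans (by positivity) hn_large
  have hnη : 2 < n * η := (div_lt_iff₀ hη).1 (by linarith [div_pos two_pos hδ])
  have hnδ : 2 < n * δ := (div_lt_iff₀ hδ).1 (by linarith [div_pos two_pos hη])
  have hz₁ : 0 < z.1 := hn₀.trans_le hnz
  have hz₂ : (d ^ 2 + δ) * z.1 < z.2 := (lt_div_iff₀ hz₁).1 hslope
  have hsteep : m ^ 2 * z.1 ≤ z.2 - 1 := by nlinarith
  have hgap : m - (d + η) = η := by ring
  have hgain := muSh_gain_of_steep (e := d + η) (by positivity) hsteep (sqrt_nonneg _) hn₀ hnz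
    (by rw [hgap]; linarith)
  rw [hgap] at hgain
  nlinarith [mul_lt_mul_of_pos_left hn hη]

/-- **Lemma 3.2.** A deterministic estimate on the shape function μ:
for δ, ε > 0 there are η > 0, c > 0 and R < ∞ such that whenever
`z(2)/z(1) > d_ρ² + δ`, `|z| > R` and `ε|z| < n ≤ z(1)`, one has
`μ(z - (0,1)) - μ(z - (n, -(d_ρ + η)n)) > c|z|`. -/
theorem shape_function_cone_estimate
    (rho δ ε : ℝ) (hrho : rho ∈ Ico (0 : ℝ) 1) (hδ : 0 < δ) (hε : 0 < ε) :
    ∃ η > (0 : ℝ), ∃ c > (0 : ℝ), ∃ R : ℝ,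
      ∀ z : ℝ × ℝ, 0 ≤ z.1 → 0 ≤ z.2 →
        (rho / (1 - rho)) ^ 2 + δ < z.2 / z.1 → R < rnorm z →
        ∀ n : ℝ, ε * rnorm z < n → n ≤ z.1 →
          muSh (z - (0, 1)) - muSh (z - (n, -(rho / (1 - rho) + η) * n)) > c * rnorm z := by
  have hd : 0 ≤ rho / (1 - rho) := div_nonneg hrho.1 (sub_nonneg.2 hrho.2.le)
  obtain ⟨η, hη, c, hc, R, hgain⟩ := exists_muSh_gain hd hδ hε
  exact ⟨η, hη, c, hc, R, fun z _ _ => hgain z⟩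

end CompetitionInterface
end
end

section
/- Let G : ℤ² → ℝ be any function such that G(z + (1,0)) ≠ G(z + (0,1)) for all z ∈ ℤ², and define Y(i, j) = min(G(i, j+1), G(i+1, j)) − G(i, j). Suppose (z_n)_{n ≥ 0} is a North-East Minimizing Sequence for G, i.e., z_{n+1} = z_n + (1,0) if G(z_n + (1,0)) < G(z_n + (0,1)) and z_{n+1} = z_n + (0,1) otherwise. Then (z_n) is a geodesic for the weights Y: for all 0 ≤ k ≤ ℓ, the segment z_k, …, z_ℓ maximizes Σ_{n=0}^{m−1} Y(w_n) over all directed paths w₀ = z_k, w₁, …, w_m = z_ℓ from z_k to z_ℓ (the sum taken over all points of the path except the final one), and the maximum value equals G(z_ℓ) − G(z_k). -/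
open MeasureTheory ProbabilityTheory Filter Real Set Topology

noncomputable section

namespace CompetitionInterface

/-! Each step `a → b` of a directed path gains at most `G b - G a` in `Y`-weight, with equality
for the step that minimizes `G`; summing, every path's weight telescopes to at most the increment
of `G` between its endpoints, and the NEMS attains it. -/

section Telescoping

variable {α : Type*} {R : α → α → Prop} {G Y : α → ℝ}

theorem sum_map_dropLast_le_of_isChain (hstep : ∀ a b, R a b → Y a ≤ G b - G a) :
    ∀ {p : List α} {a b : α}, p.IsChain R → p.head? = some a → p.getLast? = some b →
      (p.dropLast.map Y).sum ≤ G b - G a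
  | [], _, _, _, ha, _ => by simp at ha
  | [c], a, b, _, ha, hb => by
    simp only [List.head?_cons, List.getLast?_singleton, Option.some.injEq] at ha hb
    simp [← ha, ← hb]
  | c :: d :: p, a, b, hp, ha, hb => by
    obtain ⟨hcd, hdp⟩ := List.isChain_cons_cons.mp hp
    simp only [List.head?_cons, Option.some.injEq] at ha
    subst ha
    rw [List.getLast?_cons_cons] at hb
    have htail := sum_map_dropLast_le_of_isChain hstep hdp rfl hb
    have hfirst := hstep c d hcd
    simp only [List.dropLast_cons_cons, List.map_cons, List.sum_cons]
    linarith

end Telescoping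

theorem weight_le_increment_of_dStep (G Y : ℤ × ℤ → ℝ)
    (hY : ∀ z : ℤ × ℤ, Y z = min (G (z + (0, 1))) (G (z + (1, 0))) - G z)
    {a b : ℤ × ℤ} (h : DStep a b) : Y a ≤ G b - G a := by
  rw [hY]
  rcases h with rfl | rfl
  · exact sub_le_sub_right (min_le_right _ _) _
  · exact sub_le_sub_right (min_le_left _ _) _

theorem weight_eq_increment_of_argmin_step (G Y : ℤ × ℤ → ℝ)
    (hY : ∀ z : ℤ × ℤ, Y z = min (G (z + (0, 1))) (G (z + (1, 0))) - G z) (a : ℤ × ℤ) :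
    Y a = G (if G (a + (1, 0)) < G (a + (0, 1)) then a + (1, 0) else a + (0, 1)) - G a := by
  rw [hY]
  split_ifs with h
  · rw [min_eq_right h.le]
  · rw [min_eq_left (not_lt.mp h)]

theorem nems_is_geodesic_general
    (G : ℤ × ℤ → ℝ)
    (Y : ℤ × ℤ → ℝ) (hY : ∀ z : ℤ × ℤ, Y z = min (G (z + (0, 1))) (G (z + (1, 0))) - G z)
    (z : ℕ → ℤ × ℤ)
    (hz : ∀ n, z (n + 1) =
      if G (z n + (1, 0)) < G (z n + (0, 1)) then z n + (1, 0) else z n + (0, 1)) :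
    ∀ k l : ℕ, k ≤ l →
      (∑ j ∈ Finset.Ico k l, Y (z j)) = G (z l) - G (z k) ∧
      ∀ p : List (ℤ × ℤ), IsDirPath (z k) (z l) p →
        ((p.dropLast).map Y).sum ≤ G (z l) - G (z k) := by
  intro k l hkl
  have hYz : ∀ n, Y (z n) = G (z (n + 1)) - G (z n) := fun n => by
    rw [hz n, weight_eq_increment_of_argmin_step G Y hY]
  refine ⟨?_, fun p ⟨_, hhead, hlast, hchain⟩ => ?_⟩
  · simp only [hYz]
    exact Finset.sum_Ico_sub (fun n => G (z n)) hkl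
  · exact sum_map_dropLast_le_of_isChain
      (fun _ _ h => weight_le_increment_of_dStep G Y hY h) hchain hhead hlast

/-- **Lemma 4.3, deterministic form.** If `G : ℤ² → ℝ` has
`G(z+(1,0)) ≠ G(z+(0,1))` everywhere, `Y(i,j) = min(G(i,j+1), G(i+1,j)) - G(i,j)`, and
`(z_n)` is a North-East Minimizing Sequence for `G`, then `(z_n)` is a geodesic for the
weights `Y`: for `k ≤ l`, the segment `z_k, …, z_l` maximizes the `Y`-weight (summed over
all points of a directed path except the final one) among directed paths from `z_k` to
`z_l`, and the maximal weight equals `G(z_l) - G(z_k)`. -/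
theorem nems_is_geodesic
    (G : ℤ × ℤ → ℝ) (hG : ∀ z : ℤ × ℤ, G (z + (1, 0)) ≠ G (z + (0, 1)))
    (Y : ℤ × ℤ → ℝ) (hY : ∀ z : ℤ × ℤ, Y z = min (G (z + (0, 1))) (G (z + (1, 0))) - G z)
    (z : ℕ → ℤ × ℤ)
    (hz : ∀ n, z (n + 1) =
      if G (z n + (1, 0)) < G (z n + (0, 1)) then z n + (1, 0) else z n + (0, 1)) :
    ∀ k l : ℕ, k ≤ l →
      (∑ j ∈ Finset.Ico k l, Y (z j)) = G (z l) - G (z k) ∧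
      ∀ p : List (ℤ × ℤ), IsDirPath (z k) (z l) p →
        ((p.dropLast).map Y).sum ≤ G (z l) - G (z k) :=
  nems_is_geodesic_general G Y hY z hz

end CompetitionInterface
end
end
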